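/- arXiv:math/0401065 — 3 statements merged into one kernel-verified Lean document; each statement's English description precedes it below -/
import Mathlib

section
/- For every natural number k, Σ_{i=0}^{k} 2^{k+2−i} (−1)^{k−i} (k+1−i) · C(k+3, i) = (−1)^k · (k+2 + (−1)^k (k+2)). -/
/-!
Put `n = k + 3`. Multiplying the summand by `-2` turns it into
`C(n, i) (-2)^(n-i) (n - 2 - i)`, i.e. a truncation of the sum
`∑_{i ≤ n} C(n, i) x^i y^(n-i) (c - i) = c (x+y)^n - n x (x+y)^(n-1)` at `x = 1, y = -2, c = n - 2`,
which equals `2 (n - 1) (-1)^n`. The three missing terms `i = n-2, n-1, n` contribute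
`0 + 2n - 2`, and solving for the original sum gives `(k + 2) (1 + (-1)^k)`.
-/

open Finset

section BinomialSums

variable {R : Type*} [CommRing R]

theorem sum_range_mul_choose_mul_pow_mul_pow (x y : R) (n : ℕ) :
    ∑ i ∈ range (n + 1), (i : R) * n.choose i * x ^ i * y ^ (n - i) =
      n * x * (x + y) ^ (n - 1) := by
  cases n with
  | zero => simp
  | succ m =>
    have hshift : ∀ i ∈ range (m + 1),
        ((i + 1 : ℕ) : R) * (m + 1).choose (i + 1) * x ^ (i + 1) * y ^ (m + 1 - (i + 1)) =
          (m + 1) * x * (x ^ i * y ^ (m - i) * m.choose i) := by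
      intro i _
      have h := congrArg (Nat.cast : ℕ → R) (Nat.add_one_mul_choose_eq m i)
      push_cast at h ⊢
      linear_combination (-(x ^ (i + 1) * y ^ (m - i))) * h
    rw [sum_range_succ', sum_congr rfl hshift, ← mul_sum, ← add_pow]
    simp

theorem sum_range_choose_mul_pow_mul_pow_mul_sub (x y c : R) (n : ℕ) :
    ∑ i ∈ range (n + 1), (n.choose i : R) * x ^ i * y ^ (n - i) * (c - i) =
      c * (x + y) ^ n - n * x * (x + y) ^ (n - 1) := by
  rw [← sum_range_mul_choose_mul_pow_mul_pow, add_pow, mul_comm c, sum_mul, ← sum_sub_distrib]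
  exact sum_congr rfl fun i _ => by ring

end BinomialSums

theorem euler_char_22 (k : ℕ) :
    ∑ i ∈ Finset.range (k + 1),
        (2 : ℤ) ^ (k + 2 - i) * (-1 : ℤ) ^ (k - i) * ((k : ℤ) + 1 - (i : ℤ)) *
          (Nat.choose (k + 3) i : ℤ) =
      (-1 : ℤ) ^ k * ((k : ℤ) + 2 + (-1 : ℤ) ^ k * ((k : ℤ) + 2)) := by
  have hterm : ∀ i ∈ range (k + 1),
      (2 : ℤ) ^ (k + 2 - i) * (-1 : ℤ) ^ (k - i) * ((k : ℤ) + 1 - (i : ℤ)) *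
          (Nat.choose (k + 3) i : ℤ) * (-2) =
        ((k + 3).choose i : ℤ) * 1 ^ i * (-2) ^ (k + 3 - i) * ((k + 1 : ℤ) - i) := by
    intro i hi
    have hik : i ≤ k := Nat.lt_succ_iff.mp (mem_range.mp hi)
    rw [show k + 3 - i = (k - i) + 3 by omega, show k + 2 - i = (k - i) + 2 by omega,
      neg_pow (2 : ℤ)]
    ring
  have hfull := sum_range_choose_mul_pow_mul_pow_mul_sub (1 : ℤ) (-2) (k + 1) (k + 3)
  rw [sum_range_succ, sum_range_succ, sum_range_succ, ← sum_congr rfl hterm, ← sum_mul] at hfull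
  simp only [show k + 3 - (k + 2) = 1 by omega, show k + 3 - (k + 1) = 2 by omega,
    Nat.sub_self, Nat.choose_self, Nat.choose_succ_self_right] at hfull
  have hsq : (-1 : ℤ) ^ k * (-1) ^ k = 1 := pow_mul_pow_eq_one k rfl
  apply mul_right_cancel₀ (show (-2 : ℤ) ≠ 0 by norm_num)
  push_cast at hfull
  linear_combination hfull + (2 * (k : ℤ) + 4) * hsq
end

section
/- The Euler characteristic of a type (2,2) complete intersection in P^{k+2} equals 0 when k is odd and equals 2(k+2) when k is even, where it is defined as χ_{22}(k) = Σ_{i=0}^{k} 2^{k+2−i} (−1)^{k−i} (k+1−i) · C(k+3, i). -/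
/-!
Up to the factor `-2`, the `i`-th summand of `χ₂₂(k)` is `(k + 1 - i) (-2)^(k+3-i) C(k+3, i)`,
a weighted term of the binomial expansion of `(1 - 2)^(k+3)`. Summed over the full range
`0 ≤ i ≤ k + 3`, the binomial theorem and its derivative give `-(-1)^k (2k + 4)`, while the three
terms with `i > k` add up to `2k + 4`. Hence `χ₂₂(k) = (k + 2)(1 + (-1)^k)`.
-/

open Finset

theorem sum_range_natCast_mul_pow_mul_pow_mul_choose {R : Type*} [CommSemiring R]
    (x y : R) (n : ℕ) :
    ∑ i ∈ range (n + 1), (i : R) * (x ^ i * y ^ (n - i) * n.choose i) =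
      n * x * (x + y) ^ (n - 1) := by
  cases n with
  | zero => simp
  | succ m =>
    rw [sum_range_succ', Nat.add_sub_cancel, add_pow, mul_sum]
    simp only [Nat.cast_zero, zero_mul, add_zero]
    refine sum_congr rfl fun i _ => ?_
    have hchoose : ((i + 1 : ℕ) : R) * (m + 1).choose (i + 1) = (m + 1 : ℕ) * m.choose i := by
      rw [← Nat.cast_mul, ← Nat.cast_mul, mul_comm, Nat.add_one_mul_choose_eq]
    calc _ = x ^ i * x * y ^ (m - i) * (((i + 1 : ℕ) : R) * (m + 1).choose (i + 1)) := by
          rw [Nat.add_sub_add_right, pow_succ]; ring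
      _ = _ := by rw [hchoose]; ring

theorem sum_range_sub_natCast_mul_pow_mul_pow_mul_choose {R : Type*} [CommRing R]
    (c x y : R) (n : ℕ) :
    ∑ i ∈ range (n + 1), (c - i) * (x ^ i * y ^ (n - i) * n.choose i) =
      c * (x + y) ^ n - n * x * (x + y) ^ (n - 1) := by
  simp only [sub_mul, sum_sub_distrib, ← mul_sum, ← add_pow,
    sum_range_natCast_mul_pow_mul_pow_mul_choose]

def chi22 (k : ℕ) : ℤ :=
  ∑ i ∈ range (k + 1),
    (2 : ℤ) ^ (k + 2 - i) * (-1 : ℤ) ^ (k - i) * ((k : ℤ) + 1 - (i : ℤ)) *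
      (Nat.choose (k + 3) i : ℤ)

theorem neg_two_mul_chi22 (k : ℕ) :
    -2 * chi22 k =
      ∑ i ∈ range (k + 1), ((k : ℤ) + 1 - i) * ((-2) ^ (k + 3 - i) * (k + 3).choose i) := by
  rw [chi22, mul_sum]
  refine sum_congr rfl fun i hi => ?_
  obtain ⟨j, rfl⟩ := Nat.exists_eq_add_of_le (mem_range_succ_iff.mp hi)
  rw [show i + j + 2 - i = j + 2 by omega, show i + j - i = j by omega,
    show i + j + 3 - i = j + 3 by omega, show (-2 : ℤ) = -1 * 2 by norm_num, mul_pow]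
  ring

theorem chi22_eq (k : ℕ) : chi22 k = (k + 2) * (1 + (-1) ^ k) := by
  have hfull := sum_range_sub_natCast_mul_pow_mul_pow_mul_choose ((k : ℤ) + 1) 1 (-2) (k + 3)
  simp only [one_pow, one_mul, show (1 : ℤ) + -2 = -1 by norm_num] at hfull
  rw [sum_range_succ, sum_range_succ, sum_range_succ, ← neg_two_mul_chi22] at hfull
  simp only [Nat.choose_succ_self_right, Nat.choose_self, Nat.reduceSubDiff,
    add_tsub_cancel_left, tsub_self] at hfull
  push_cast at hfull
  refine mul_left_cancel₀ (show (-2 : ℤ) ≠ 0 by norm_num) ?_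
  linear_combination hfull

theorem chi_22_values (k : ℕ) :
    (Odd k → ∑ i ∈ Finset.range (k + 1),
        (2 : ℤ) ^ (k + 2 - i) * (-1 : ℤ) ^ (k - i) * ((k : ℤ) + 1 - (i : ℤ)) *
          (Nat.choose (k + 3) i : ℤ) = 0) ∧
    (Even k → ∑ i ∈ Finset.range (k + 1),
        (2 : ℤ) ^ (k + 2 - i) * (-1 : ℤ) ^ (k - i) * ((k : ℤ) + 1 - (i : ℤ)) *
          (Nat.choose (k + 3) i : ℤ) = 2 * ((k : ℤ) + 2)) := by
  refine ⟨fun hk => ?_, fun hk => ?_⟩ <;> change chi22 k = _ <;> rw [chi22_eq]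
  · rw [hk.neg_one_pow]; ring
  · rw [hk.neg_one_pow]; ring
end

section
/- The integral formula Σ over the coefficient of H^{k+2} in (2H/(1+2H))^2 · (1+H)^{k+3} equals Σ_{i=0}^{k} 2^{k+2−i}(−1)^{k−i}(k+1−i)·C(k+3,i). -/
/-! `(1 + 2H)⁻²` is the rescaling `H ↦ -2H` of `(1 - H)⁻² = ∑ (n + 1) Hⁿ`, so the coefficient of
`H^(k+2)` is `4` times the Cauchy product at `H^k` of `∑ (n + 1) (-2)ⁿ Hⁿ` with the binomial
expansion of `(1 + H)^(k+3)`. -/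

open PowerSeries

namespace PowerSeries

theorem coeff_one_add_X_pow {R : Type*} [CommSemiring R] (m n : ℕ) :
    coeff n ((1 + X : R⟦X⟧) ^ m) = m.choose n := by
  rw [← Polynomial.coe_X, ← Polynomial.coe_one, ← Polynomial.coe_add, ← Polynomial.coe_pow,
    Polynomial.coeff_coe, Polynomial.coeff_one_add_X_pow]

variable {K : Type*} [Field K]

theorem inv_one_sub_C_mul_X (a : K) : (1 - C a * X)⁻¹ = rescale a (mk 1) := by
  rw [inv_eq_iff_mul_eq_one (by simp), ← rescale_X, ← map_one (rescale a), ← map_sub,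
    ← map_mul, mk_one_mul_one_sub_eq_one, map_one]

theorem coeff_inv_one_sub_C_mul_X_pow_succ (a : K) (d n : ℕ) :
    coeff n ((1 - C a * X)⁻¹ ^ (d + 1)) = a ^ n * (d + n).choose d := by
  rw [inv_one_sub_C_mul_X, ← map_pow, mk_one_pow_eq_mk_choose_add, coeff_rescale, coeff_mk]

end PowerSeries

theorem coeff_integral_formula (k : ℕ) :
    (PowerSeries.coeff (R := ℚ) (k + 2))
        ((2 * PowerSeries.X * (1 + 2 * PowerSeries.X)⁻¹) ^ 2 *
          (1 + PowerSeries.X) ^ (k + 3)) =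
      ∑ i ∈ Finset.range (k + 1),
        (2 : ℚ) ^ (k + 2 - i) * (-1 : ℚ) ^ (k - i) * ((k : ℚ) + 1 - (i : ℚ)) *
          (Nat.choose (k + 3) i : ℚ) := by
  have hfactor : (2 * X * (1 + 2 * X)⁻¹) ^ 2 * (1 + X) ^ (k + 3) =
      X ^ 2 * (C 4 * ((1 + X) ^ (k + 3) * (1 - C (-2 : ℚ) * X)⁻¹ ^ (1 + 1))) := by
    rw [map_neg, map_ofNat, map_ofNat, neg_mul, sub_neg_eq_add]
    ring
  rw [hfactor, coeff_X_pow_mul, coeff_C_mul, coeff_mul,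
    Finset.Nat.sum_antidiagonal_eq_sum_range_succ_mk, Finset.mul_sum]
  refine Finset.sum_congr rfl fun i hi => ?_
  have hik : i ≤ k := Finset.mem_range_succ_iff.mp hi
  rw [coeff_one_add_X_pow, coeff_inv_one_sub_C_mul_X_pow_succ, Nat.choose_one_right, neg_pow,
    show k + 2 - i = (k - i) + 2 by omega]
  push_cast [Nat.cast_sub hik]
  ring
end
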